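/- Let ι_n : ℂ[S_n] → ℂ[S_{n+1}] be the algebra homomorphism induced by the standard embedding S_n ↪ S_{n+1} (extending each permutation of {1,…,n} by fixing n+1). Then ι_n maps Lie elements to Lie elements: ι_n(L_n) ⊆ L_{n+1}. -/

import Mathlib

/-- The wedge product `v₁ ∧ ⋯ ∧ vₘ` of a family of vectors, as an element of the `m`-th
exterior power `⋀[k]^m V`. -/
noncomputable def wedge (k : Type*) [Field k] (V : Type*) [AddCommGroup V] [Module k V]
    (m : ℕ) (v : Fin m → V) : ⋀[k]^m V :=
  ⟨ExteriorAlgebra.ιMulti k m v, ExteriorAlgebra.ιMulti_range k m (Set.mem_range_self v)⟩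

/-- The permutation representation of the symmetric group `S_n` on `ℂⁿ`: a permutation `σ`
sends the basis vector `xᵢ` to `x_{σ i}`, i.e. it acts on coordinate functions by
`(σ · v) i = v (σ⁻¹ i)`. -/
noncomputable def permRep (n : ℕ) : Representation ℂ (Equiv.Perm (Fin n)) (Fin n → ℂ) where
  toFun σ := LinearMap.funLeft ℂ ℂ ⇑σ⁻¹
  map_one' := by ext v i; simp [LinearMap.funLeft]
  map_mul' σ τ := by ext v i; simp [LinearMap.funLeft]


/-!
Write `ℂⁿ⁺¹ = ℂⁿ ⊕ ℂ e` with `e = x_{n+1}`, which every permutation in the image of `S_n` fixes.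
The exterior power `⋀ᵐ ℂⁿ⁺¹` is spanned by wedges of vectors of `ℂⁿ` and by such wedges followed
by `e`. On the first kind `A_m(ι x)` and `B_m(ι x)` act through `A_m(x)` and `B_m(x)`, by
naturality along `ℂⁿ ↪ ℂⁿ⁺¹`. On `w ∧ e` one gets `A_m(x) w ∧ e` and
`B_m(x) w ∧ e + ε(x) w ∧ e`, where `ε` is the augmentation, and `ε(x) = 0` is exactly the
condition `A_0(x) = B_0(x)`.
-/

open Function exteriorPower

lemma wedge_eq_ιMulti (k : Type*) [Field k] (V : Type*) [AddCommGroup V] [Module k V] (m : ℕ) :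
    wedge k V m = ιMulti k m := rfl

section Actions

variable {k G V W : Type*} [CommRing k] [Monoid G] [AddCommGroup V] [Module k V]
  [AddCommGroup W] [Module k W]

/-- `F m` is the linear extension to `k[G]` of the operators `A_m(g)` (for
`IsExteriorPowerAction`) or `B_m(g)` (for `IsDerivationAction`) on `⋀ᵐ V`. -/
def IsExteriorPowerAction (ρ : Representation k G V)
    (F : (m : ℕ) → MonoidAlgebra k G →ₗ[k] Module.End k (⋀[k]^m V)) : Prop :=
  ∀ m g (v : Fin m → V),
    F m (MonoidAlgebra.single g 1) (ιMulti k m v) = ιMulti k m fun p => ρ g (v p)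

def IsDerivationAction (ρ : Representation k G V)
    (F : (m : ℕ) → MonoidAlgebra k G →ₗ[k] Module.End k (⋀[k]^m V)) : Prop :=
  ∀ m g (v : Fin m → V),
    F m (MonoidAlgebra.single g 1) (ιMulti k m v) = ∑ p, ιMulti k m (update v p (ρ g (v p)))

variable (k G) in
noncomputable def augmentation : MonoidAlgebra k G →ₐ[k] k := MonoidAlgebra.lift k k G 1

@[simp]
lemma augmentation_single (g : G) (r : k) : augmentation k G (MonoidAlgebra.single g r) = r := by
  simp [augmentation, MonoidAlgebra.lift_single]

lemma LinearMap.map_single_eq_smul {M : Type*} [AddCommMonoid M] [Module k M]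
    (F : MonoidAlgebra k G →ₗ[k] M) (g : G) (r : k) :
    F (MonoidAlgebra.single g r) = r • F (MonoidAlgebra.single g 1) := by
  rw [← map_smul, MonoidAlgebra.smul_single', mul_one]

lemma ExteriorAlgebra.ιMulti_snoc {m : ℕ} (v : Fin m → V) (e : V) :
    ExteriorAlgebra.ιMulti k (m + 1) (Fin.snoc v e) =
      ExteriorAlgebra.ιMulti k m v * ExteriorAlgebra.ι k e := by
  rw [Fin.snoc_eq_append, ← ExteriorAlgebra.ιMulti_mul_ιMulti]
  simp

variable {ρ : Representation k G V}
  {F : (m : ℕ) → MonoidAlgebra k G →ₗ[k] Module.End k (⋀[k]^m V)}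

theorem IsExteriorPowerAction.comp {H : Type*} [Monoid H] (hF : IsExteriorPowerAction ρ F)
    (f : H →* G) :
    IsExteriorPowerAction (ρ.comp f)
      fun m => F m ∘ₗ (MonoidAlgebra.mapDomainAlgHom k k f).toLinearMap := fun m h v => by
  rw [LinearMap.comp_apply, AlgHom.toLinearMap_apply, MonoidAlgebra.mapDomainAlgHom_apply,
    MonoidAlgebra.mapDomain_single]
  exact hF m (f h) v

theorem IsDerivationAction.comp {H : Type*} [Monoid H] (hF : IsDerivationAction ρ F)
    (f : H →* G) :
    IsDerivationAction (ρ.comp f)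
      fun m => F m ∘ₗ (MonoidAlgebra.mapDomainAlgHom k k f).toLinearMap := fun m h v => by
  rw [LinearMap.comp_apply, AlgHom.toLinearMap_apply, MonoidAlgebra.mapDomainAlgHom_apply,
    MonoidAlgebra.mapDomain_single]
  exact hF m (f h) v

theorem IsExteriorPowerAction.apply_map {ρ' : Representation k G W}
    {F' : (m : ℕ) → MonoidAlgebra k G →ₗ[k] Module.End k (⋀[k]^m W)}
    (hF : IsExteriorPowerAction ρ F) (hF' : IsExteriorPowerAction ρ' F') {f : V →ₗ[k] W}
    (hf : ∀ g v, f (ρ g v) = ρ' g (f v)) (m : ℕ) (x : MonoidAlgebra k G) (w : ⋀[k]^m V) :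
    F' m x (map m f w) = map m f (F m x w) := by
  suffices h : F' m x ∘ₗ map m f = map m f ∘ₗ F m x from LinearMap.congr_fun h w
  induction x using MonoidAlgebra.induction_linear with
  | zero => simp
  | add x y hx hy => simp [LinearMap.add_comp, LinearMap.comp_add, hx, hy]
  | single g r =>
    rw [(F m).map_single_eq_smul, (F' m).map_single_eq_smul, LinearMap.smul_comp,
      LinearMap.comp_smul]
    congr 1
    ext v
    simp only [LinearMap.compAlternatingMap_apply, LinearMap.comp_apply, map_apply_ιMulti]
    rw [hF', hF, map_apply_ιMulti]
    simp only [Function.comp_def, hf]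

theorem IsDerivationAction.apply_map {ρ' : Representation k G W}
    {F' : (m : ℕ) → MonoidAlgebra k G →ₗ[k] Module.End k (⋀[k]^m W)}
    (hF : IsDerivationAction ρ F) (hF' : IsDerivationAction ρ' F') {f : V →ₗ[k] W}
    (hf : ∀ g v, f (ρ g v) = ρ' g (f v)) (m : ℕ) (x : MonoidAlgebra k G) (w : ⋀[k]^m V) :
    F' m x (map m f w) = map m f (F m x w) := by
  suffices h : F' m x ∘ₗ map m f = map m f ∘ₗ F m x from LinearMap.congr_fun h w
  induction x using MonoidAlgebra.induction_linear with
  | zero => simp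
  | add x y hx hy => simp [LinearMap.add_comp, LinearMap.comp_add, hx, hy]
  | single g r =>
    rw [(F m).map_single_eq_smul, (F' m).map_single_eq_smul, LinearMap.smul_comp,
      LinearMap.comp_smul]
    congr 1
    ext v
    simp only [LinearMap.compAlternatingMap_apply, LinearMap.comp_apply, map_apply_ιMulti]
    rw [hF', hF, map_sum]
    simp only [map_apply_ιMulti, Function.comp_update, hf]
    rfl

theorem IsExteriorPowerAction.apply_zero (hF : IsExteriorPowerAction ρ F) (x : MonoidAlgebra k G) :
    F 0 x = augmentation k G x • LinearMap.id := by
  induction x using MonoidAlgebra.induction_linear with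
  | zero => simp
  | add x y hx hy => simp [hx, hy, add_smul]
  | single g r =>
    rw [(F 0).map_single_eq_smul, augmentation_single]
    congr 1
    ext v
    simp only [LinearMap.compAlternatingMap_apply, LinearMap.id_apply]
    rw [hF]
    congr 2
    exact funext fun p => p.elim0

theorem IsDerivationAction.apply_zero (hF : IsDerivationAction ρ F) (x : MonoidAlgebra k G) :
    F 0 x = 0 := by
  induction x using MonoidAlgebra.induction_linear with
  | zero => simp
  | add x y hx hy => simp [hx, hy]
  | single g r =>
    rw [(F 0).map_single_eq_smul]
    convert smul_zero r
    ext v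
    simp only [LinearMap.compAlternatingMap_apply, LinearMap.zero_apply]
    rw [hF, Finset.univ_eq_empty, Finset.sum_empty]

theorem augmentation_eq_zero_of_apply_zero_eq
    {A B : (m : ℕ) → MonoidAlgebra k G →ₗ[k] Module.End k (⋀[k]^m V)}
    (hA : IsExteriorPowerAction ρ A) (hB : IsDerivationAction ρ B) {x : MonoidAlgebra k G}
    (hx : A 0 x = B 0 x) : augmentation k G x = 0 := by
  rw [hA.apply_zero, hB.apply_zero] at hx
  have h := congrArg Subtype.val (LinearMap.congr_fun hx (ιMulti k 0 Fin.elim0))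
  simp only [LinearMap.smul_apply, LinearMap.id_apply, SetLike.val_smul, ιMulti_apply_coe,
    ExteriorAlgebra.ιMulti_zero_apply, LinearMap.zero_apply, ZeroMemClass.coe_zero] at h
  rwa [← Algebra.algebraMap_eq_smul_one, ExteriorAlgebra.algebraMap_eq_zero_iff] at h

theorem IsExteriorPowerAction.coe_apply_ιMulti_snoc (hF : IsExteriorPowerAction ρ F) {e : V}
    (he : ∀ g, ρ g e = e) {m : ℕ} (x : MonoidAlgebra k G) (v : Fin m → V) :
    (F (m + 1) x (ιMulti k (m + 1) (Fin.snoc v e)) : ExteriorAlgebra k V) =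
      F m x (ιMulti k m v) * ExteriorAlgebra.ι k e := by
  induction x using MonoidAlgebra.induction_linear with
  | zero => simp
  | add x y hx hy => simp [hx, hy, add_mul]
  | single g r =>
    rw [(F _).map_single_eq_smul, (F m).map_single_eq_smul]
    simp only [LinearMap.smul_apply, SetLike.val_smul, smul_mul_assoc]
    rw [hF, hF, ιMulti_apply_coe, ιMulti_apply_coe, ← ExteriorAlgebra.ιMulti_snoc]
    conv_rhs => rw [← he g]
    congr 3
    exact Fin.comp_snoc (ρ g) v e

theorem IsDerivationAction.coe_apply_ιMulti_snoc (hF : IsDerivationAction ρ F) {e : V}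
    (he : ∀ g, ρ g e = e) {m : ℕ} (x : MonoidAlgebra k G) (v : Fin m → V) :
    (F (m + 1) x (ιMulti k (m + 1) (Fin.snoc v e)) : ExteriorAlgebra k V) =
      F m x (ιMulti k m v) * ExteriorAlgebra.ι k e +
        augmentation k G x • ExteriorAlgebra.ιMulti k (m + 1) (Fin.snoc v e) := by
  induction x using MonoidAlgebra.induction_linear with
  | zero => simp
  | add x y hx hy =>
    simp only [map_add, LinearMap.add_apply, Submodule.coe_add, hx, hy, add_mul, add_smul]
    abel
  | single g r =>
    rw [(F _).map_single_eq_smul, (F m).map_single_eq_smul, augmentation_single]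
    simp only [LinearMap.smul_apply, SetLike.val_smul, smul_mul_assoc, ← smul_add]
    rw [hF, hF, Fin.sum_univ_castSucc]
    simp only [AddSubmonoidClass.coe_finsetSum, Submodule.coe_add, ιMulti_apply_coe,
      Finset.sum_mul, Fin.snoc_castSucc, ← Fin.snoc_update, ExteriorAlgebra.ιMulti_snoc,
      Fin.snoc_last, he, Fin.update_snoc_last]

end Actions

lemma Function.Injective.extend_single_zero {α β M : Type*} [DecidableEq α] [DecidableEq β]
    [Zero M] {ι : α → β} (hι : Injective ι) (a : α) (c : M) :
    extend ι (Pi.single a c) 0 = Pi.single (ι a) c := by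
  funext b
  by_cases hb : ∃ a', ι a' = b
  · obtain ⟨a', rfl⟩ := hb
    simp only [hι.extend_apply, Pi.single_apply, hι.eq_iff]
  · rw [extend_apply' _ _ _ hb, Pi.zero_apply, Pi.single_eq_of_ne]
    rintro rfl
    exact hb ⟨a, rfl⟩

section PermRep

open Equiv

lemma permRep_apply {n : ℕ} (σ : Perm (Fin n)) (v : Fin n → ℂ) (i : Fin n) :
    permRep n σ v i = v (σ⁻¹ i) := rfl

lemma permRep_single {n : ℕ} (σ : Perm (Fin n)) (j : Fin n) (c : ℂ) :
    permRep n σ (Pi.single j c) = Pi.single (σ j) c := by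
  funext i
  simp only [permRep_apply, Pi.single_apply, Perm.inv_eq_iff_eq]

lemma permRep_viaEmbeddingHom_extend {n N : ℕ} (ι : Fin n ↪ Fin N) (σ : Perm (Fin n))
    (v : Fin n → ℂ) :
    permRep N (Perm.viaEmbeddingHom ι σ) (extend ι v 0) = extend ι (permRep n σ v) 0 := by
  funext i
  rw [permRep_apply, ← map_inv, Perm.viaEmbeddingHom_apply]
  by_cases hi : ∃ j, ι j = i
  · obtain ⟨j, rfl⟩ := hi
    rw [Perm.viaEmbedding_apply, ι.injective.extend_apply, ι.injective.extend_apply,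
      permRep_apply]
  · rw [Perm.viaEmbedding_apply_of_notMem _ _ _ (by simpa using hi), extend_apply' _ _ _ hi,
      extend_apply' _ _ _ hi]

lemma permRep_viaEmbeddingHom_single_of_notMem {n N : ℕ} (ι : Fin n ↪ Fin N)
    (σ : Perm (Fin n)) {j : Fin N} (hj : j ∉ Set.range ι) (c : ℂ) :
    permRep N (Perm.viaEmbeddingHom ι σ) (Pi.single j c) = Pi.single j c := by
  rw [permRep_single, Perm.viaEmbeddingHom_apply, Perm.viaEmbedding_apply_of_notMem _ _ _ hj]

end PermRep

section ExtendByZero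

variable {k : Type*} [CommRing k] {n : ℕ}

/-- The basis of `⋀ᵐ kⁿ⁺¹` consists of increasing wedges of standard basis vectors: each either
avoids the last one or ends with it. -/
theorem exteriorPower.linearMap_ext_of_extendByZero_castSucc {M : ℕ → Type*}
    [∀ m, AddCommGroup (M m)] [∀ m, Module k (M m)]
    {F G : (m : ℕ) → ⋀[k]^m (Fin (n + 1) → k) →ₗ[k] M m}
    (hcast : ∀ m ≤ n, F m ∘ₗ map m (ExtendByZero.linearMap k Fin.castSucc) =
      G m ∘ₗ map m (ExtendByZero.linearMap k Fin.castSucc))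
    (hsnoc : ∀ m ≤ n, ∀ u : Fin m → Fin n → k,
      F (m + 1) (ιMulti k (m + 1)
        (Fin.snoc (ExtendByZero.linearMap k Fin.castSucc ∘ u) (Pi.single (Fin.last n) 1))) =
      G (m + 1) (ιMulti k (m + 1)
        (Fin.snoc (ExtendByZero.linearMap k Fin.castSucc ∘ u) (Pi.single (Fin.last n) 1))))
    (m : ℕ) : F m = G m := by
  have inc_single (j : Fin n) :
      ExtendByZero.linearMap k Fin.castSucc (Pi.single j 1) = Pi.single j.castSucc (1 : k) :=
    (Fin.castSucc_injective n).extend_single_zero j 1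
  refine ((Pi.basisFun k (Fin (n + 1))).exteriorPower m).ext fun s => ?_
  obtain ⟨f, rfl⟩ := Set.powersetCard.ofFinEmbEquiv.surjective s
  rw [basis_apply, ιMulti_family, Equiv.symm_apply_apply]
  by_cases hf : ∀ p, f p ≠ Fin.last n
  · choose b hb using fun p => Fin.exists_castSucc_eq.2 (hf p)
    have hb_inj : Injective b := fun p q h => f.injective (by rw [← hb p, ← hb q, h])
    have hfam : ⇑(Pi.basisFun k (Fin (n + 1))) ∘ f =
        ExtendByZero.linearMap k Fin.castSucc ∘ fun p => Pi.single (b p) 1 := by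
      funext p
      simp [inc_single, hb]
    rw [hfam, ← map_apply_ιMulti]
    exact LinearMap.congr_fun (hcast m (Fin.le_of_injective b hb_inj)) _
  · obtain ⟨p, hp⟩ : ∃ p, f p = Fin.last n := by simpa using hf
    obtain ⟨j, rfl⟩ := Nat.exists_eq_succ_of_ne_zero p.pos.ne'
    have hlast : f (Fin.last j) = Fin.last n :=
      le_antisymm (Fin.le_last _) (hp ▸ f.monotone (Fin.le_last p))
    have hlt (r : Fin j) : f r.castSucc ≠ Fin.last n := fun h =>
      (Fin.castSucc_lt_last r).ne (f.injective (h.trans hlast.symm))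
    choose b hb using fun r => Fin.exists_castSucc_eq.2 (hlt r)
    have hb_inj : Injective b := fun r q h =>
      Fin.castSucc_injective _ (f.injective (by rw [← hb r, ← hb q, h]))
    have hfam : ⇑(Pi.basisFun k (Fin (n + 1))) ∘ f = Fin.snoc
        (ExtendByZero.linearMap k Fin.castSucc ∘ fun r => Pi.single (b r) 1)
        (Pi.single (Fin.last n) 1) := by
      funext q
      cases q using Fin.lastCases <;> simp [inc_single, hb, hlast]
    rw [hfam]
    exact hsnoc j (Fin.le_of_injective b hb_inj) _

theorem IsExteriorPowerAction.apply_eq_of_extendByZero_castSucc {G : Type*} [Monoid G]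
    {ρ : Representation k G (Fin n → k)} {ρ' : Representation k G (Fin (n + 1) → k)}
    {A B : (m : ℕ) → MonoidAlgebra k G →ₗ[k] Module.End k (⋀[k]^m (Fin n → k))}
    {A' B' : (m : ℕ) → MonoidAlgebra k G →ₗ[k] Module.End k (⋀[k]^m (Fin (n + 1) → k))}
    (hA : IsExteriorPowerAction ρ A) (hB : IsDerivationAction ρ B)
    (hA' : IsExteriorPowerAction ρ' A') (hB' : IsDerivationAction ρ' B')
    (hinc : ∀ g v, ExtendByZero.linearMap k Fin.castSucc (ρ g v) =
      ρ' g (ExtendByZero.linearMap k Fin.castSucc v))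
    (hlast : ∀ g, ρ' g (Pi.single (Fin.last n) 1) = Pi.single (Fin.last n) 1)
    {x : MonoidAlgebra k G} (hx : ∀ m ≤ n, A m x = B m x) (m : ℕ) : A' m x = B' m x := by
  set inc := ExtendByZero.linearMap k (Fin.castSucc : Fin n → Fin (n + 1))
  set e : Fin (n + 1) → k := Pi.single (Fin.last n) 1
  have hε : augmentation k G x = 0 := augmentation_eq_zero_of_apply_zero_eq hA hB (hx 0 n.zero_le)
  have hcast : ∀ j ≤ n, A' j x ∘ₗ map j inc = B' j x ∘ₗ map j inc := fun j hj =>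
    LinearMap.ext fun w => by
      rw [LinearMap.comp_apply, LinearMap.comp_apply, hA.apply_map hA' hinc, hx j hj,
        hB.apply_map hB' hinc]
  refine linearMap_ext_of_extendByZero_castSucc hcast (fun j hj u => Subtype.ext ?_) m
  calc (A' (j + 1) x (ιMulti k (j + 1) (Fin.snoc (inc ∘ u) e)) : ExteriorAlgebra k _)
      = (A' j x (map j inc (ιMulti k j u)) : ExteriorAlgebra k _) * ExteriorAlgebra.ι k e := by
        rw [map_apply_ιMulti, hA'.coe_apply_ιMulti_snoc hlast]
    _ = (B' j x (map j inc (ιMulti k j u)) : ExteriorAlgebra k _) * ExteriorAlgebra.ι k e := by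
        rw [← LinearMap.comp_apply, hcast j hj, LinearMap.comp_apply]
    _ = B' (j + 1) x (ιMulti k (j + 1) (Fin.snoc (inc ∘ u) e)) := by
        rw [map_apply_ιMulti, hB'.coe_apply_ιMulti_snoc hlast, hε, zero_smul, add_zero]

end ExtendByZero

/-- The algebra homomorphism `ι_n : ℂ[S_n] → ℂ[S_{n+1}]` induced by the standard embedding
`S_n ↪ S_{n+1}` (extending a permutation of `{1,…,n}` by fixing `n+1`) maps Lie elements to
Lie elements: `ι_n(L_n) ⊆ L_{n+1}`. -/
theorem statement9 (n : ℕ)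
    (A B : (m : ℕ) → Equiv.Perm (Fin n) → Module.End ℂ (⋀[ℂ]^m (Fin n → ℂ)))
    (hA : ∀ (m : ℕ) (σ : Equiv.Perm (Fin n)) (v : Fin m → (Fin n → ℂ)),
      A m σ (wedge ℂ (Fin n → ℂ) m v) = wedge ℂ (Fin n → ℂ) m fun p => permRep n σ (v p))
    (hB : ∀ (m : ℕ) (σ : Equiv.Perm (Fin n)) (v : Fin m → (Fin n → ℂ)),
      B m σ (wedge ℂ (Fin n → ℂ) m v) =
        ∑ p : Fin m, wedge ℂ (Fin n → ℂ) m (Function.update v p (permRep n σ (v p))))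
    (Ahat Bhat : (m : ℕ) →
      MonoidAlgebra ℂ (Equiv.Perm (Fin n)) →ₗ[ℂ] Module.End ℂ (⋀[ℂ]^m (Fin n → ℂ)))
    (hAhat : ∀ (m : ℕ) (σ : Equiv.Perm (Fin n)), Ahat m (MonoidAlgebra.single σ 1) = A m σ)
    (hBhat : ∀ (m : ℕ) (σ : Equiv.Perm (Fin n)), Bhat m (MonoidAlgebra.single σ 1) = B m σ)
    (A' B' : (m : ℕ) → Equiv.Perm (Fin (n + 1)) → Module.End ℂ (⋀[ℂ]^m (Fin (n + 1) → ℂ)))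
    (hA' : ∀ (m : ℕ) (σ : Equiv.Perm (Fin (n + 1))) (v : Fin m → (Fin (n + 1) → ℂ)),
      A' m σ (wedge ℂ (Fin (n + 1) → ℂ) m v) =
        wedge ℂ (Fin (n + 1) → ℂ) m fun p => permRep (n + 1) σ (v p))
    (hB' : ∀ (m : ℕ) (σ : Equiv.Perm (Fin (n + 1))) (v : Fin m → (Fin (n + 1) → ℂ)),
      B' m σ (wedge ℂ (Fin (n + 1) → ℂ) m v) =
        ∑ p : Fin m, wedge ℂ (Fin (n + 1) → ℂ) m (Function.update v p (permRep (n + 1) σ (v p))))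
    (Ahat' Bhat' : (m : ℕ) →
      MonoidAlgebra ℂ (Equiv.Perm (Fin (n + 1))) →ₗ[ℂ] Module.End ℂ (⋀[ℂ]^m (Fin (n + 1) → ℂ)))
    (hAhat' : ∀ (m : ℕ) (σ : Equiv.Perm (Fin (n + 1))),
      Ahat' m (MonoidAlgebra.single σ 1) = A' m σ)
    (hBhat' : ∀ (m : ℕ) (σ : Equiv.Perm (Fin (n + 1))),
      Bhat' m (MonoidAlgebra.single σ 1) = B' m σ) :
    let ι : MonoidAlgebra ℂ (Equiv.Perm (Fin n)) →ₐ[ℂ] MonoidAlgebra ℂ (Equiv.Perm (Fin (n + 1))) :=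
      MonoidAlgebra.mapDomainAlgHom ℂ ℂ (Equiv.Perm.viaEmbeddingHom Fin.castSuccEmb)
    ∀ x : MonoidAlgebra ℂ (Equiv.Perm (Fin n)),
      (∀ m ≤ n, Ahat m x = Bhat m x) →
      ∀ m ≤ n + 1, Ahat' m (ι x) = Bhat' m (ι x) := by
  intro ι x hx m _
  have hA₀ : IsExteriorPowerAction (permRep n) Ahat := fun m σ v => by
    rw [hAhat]; simpa only [wedge_eq_ιMulti] using hA m σ v
  have hB₀ : IsDerivationAction (permRep n) Bhat := fun m σ v => by
    rw [hBhat]; simpa only [wedge_eq_ιMulti] using hB m σ v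
  have hA₁ : IsExteriorPowerAction (permRep (n + 1)) Ahat' := fun m σ v => by
    rw [hAhat']; simpa only [wedge_eq_ιMulti] using hA' m σ v
  have hB₁ : IsDerivationAction (permRep (n + 1)) Bhat' := fun m σ v => by
    rw [hBhat']; simpa only [wedge_eq_ιMulti] using hB' m σ v
  exact hA₀.apply_eq_of_extendByZero_castSucc hB₀ (hA₁.comp _) (hB₁.comp _)
    (fun σ v => (permRep_viaEmbeddingHom_extend Fin.castSuccEmb σ v).symm)
    (fun σ => permRep_viaEmbeddingHom_single_of_notMem _ σ (by simp) 1) hx m
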